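/- Let d ≥ 1, T > 0, and let K : [T, ∞) → Matrix (Fin d) (Fin d) ℝ be continuous with ‖K(t) − (1/t)·I_d‖ ≤ C/t² for all t ≥ T, for some constant C > 0. Let W : [T, ∞) → Matrix (Fin d) (Fin d) ℝ be the C¹ solution of the linear ODE W'(t) = W(t)·K(t) with W(T) = T·I_d. Then there exists an invertible matrix W_∞ ∈ Matrix (Fin d) (Fin d) ℝ such that ‖ (1/t) W(t) − W_∞ ‖ → 0 as t → ∞; in particular W(t) ∼ t·W_∞ grows linearly in t. -/

import Mathlib

/-!
With `V t = t⁻¹ • W t` and `E t = K t - t⁻¹ • 1` one has `V' = V E`, `V T = 1` and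
`‖E t‖ = O(t⁻²)`, an integrable rate. A comparison with the barrier `exp (k (1/T - 1/t))` bounds
`‖V‖` uniformly, so `‖V'‖ = O(t⁻²)` and `V` is Cauchy at infinity. By Jacobi's formula
`(det V)' = det V · tr E`, and the same comparison, run from below, keeps `det V` above a positive
constant; hence the limit of `V` has positive determinant.
-/

attribute [local instance] Matrix.normedAddCommGroup Matrix.normedSpace

open Set Filter Topology Real

namespace Matrix

variable {l m n p α : Type*} [Fintype l] [Fintype m] [Fintype n] [Fintype p]

theorem norm_mul_le_card_mul [NormedRing α] (A : Matrix l m α) (B : Matrix m p α) :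
    ‖A * B‖ ≤ Fintype.card m * ‖A‖ * ‖B‖ := by
  rw [norm_le_iff (by positivity)]
  intro i j
  calc ‖(A * B) i j‖ ≤ ∑ k, ‖A i k‖ * ‖B k j‖ :=
        (norm_sum_le _ _).trans (Finset.sum_le_sum fun k _ => norm_mul_le _ _)
    _ ≤ ∑ _k : m, ‖A‖ * ‖B‖ := by
        gcongr <;> exact norm_entry_le_entrywise_sup_norm _
    _ = Fintype.card m * ‖A‖ * ‖B‖ := by simp [mul_assoc]

theorem norm_trace_le_card_mul [NormedRing α] (A : Matrix n n α) :
    ‖A.trace‖ ≤ Fintype.card n * ‖A‖ :=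
  calc ‖A.trace‖ ≤ ∑ i, ‖A i i‖ := norm_sum_le _ _
    _ ≤ ∑ _i : n, ‖A‖ := Finset.sum_le_sum fun _ _ => norm_entry_le_entrywise_sup_norm _
    _ = Fintype.card n * ‖A‖ := by simp

variable [DecidableEq n]

theorem differentiable_det : Differentiable ℝ (det : Matrix n n ℝ → ℝ) := by
  rw [show (det : Matrix n n ℝ → ℝ) =
      fun M => ∑ σ : Equiv.Perm n, Equiv.Perm.sign σ • ∏ i, M (σ i) i from funext det_apply]
  fun_prop

theorem fderiv_det_apply_mul (A E : Matrix n n ℝ) :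
    fderiv ℝ det A (A * E) = A.det * E.trace := by
  have hline : HasDerivAt (fun h : ℝ => A + h • (A * E)) (A * E) 0 :=
    (((hasDerivAt_id (0 : ℝ)).smul_const (A * E)).const_add A).congr_deriv (one_smul _ _)
  have hchain := (differentiable_det A).hasFDerivAt.comp_hasDerivAt_of_eq (0 : ℝ) hline
    (by simp)
  -- along the line `A + h • (A * E) = A * (1 + h • E)` the determinant is a polynomial in `h`
  set p := (det (1 + (Polynomial.X : Polynomial ℝ) • E.map Polynomial.C)).divX.divX
  have hpoly : HasDerivAt (fun h : ℝ => A.det * (1 + E.trace * h + p.eval h * h ^ 2))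
      (A.det * E.trace) 0 := by
    have := (((hasDerivAt_id (0:ℝ)).const_mul E.trace).const_add 1).add
      ((p.hasDerivAt 0).mul ((hasDerivAt_id (0:ℝ)).pow 2))
    simpa using this.const_mul A.det
  refine hchain.unique (hpoly.congr_of_eventuallyEq (Eventually.of_forall fun h => ?_))
  simp only [Function.comp_apply]
  rw [← det_one_add_smul, ← det_mul, mul_add, mul_one, mul_smul_comm]

end Matrix

variable {n : Type*} [Fintype n]

theorem HasDerivWithinAt.matrix_det_of_mul [DecidableEq n] {V : ℝ → Matrix n n ℝ}
    {E : Matrix n n ℝ} {s : Set ℝ} {t : ℝ} (hV : HasDerivWithinAt V (V t * E) s t) :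
    HasDerivWithinAt (fun u => (V u).det) ((V t).det * E.trace) s t :=
  ((Matrix.differentiable_det (V t)).hasFDerivAt.comp_hasDerivWithinAt t hV).congr_deriv
    (Matrix.fderiv_det_apply_mul _ _)

theorem HasDerivWithinAt.one_div_smul_of_mul [DecidableEq n] {W : ℝ → Matrix n n ℝ}
    {K : Matrix n n ℝ} {s : Set ℝ} {t : ℝ} (hW : HasDerivWithinAt W (W t * K) s t) (ht : t ≠ 0) :
    HasDerivWithinAt (fun u => (1 / u) • W u) ((1 / t) • W t * (K - (1 / t) • 1)) s t := by
  have hinv : HasDerivWithinAt (fun u : ℝ => 1 / u) (-(1 / t) * (1 / t)) s t := by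
    simpa [one_div, sq] using (hasDerivAt_inv ht).hasDerivWithinAt
  refine (hinv.smul hW).congr_deriv ?_
  rw [Matrix.mul_sub, Matrix.mul_smul, mul_one, smul_mul_assoc, smul_smul, neg_mul, neg_smul,
    sub_eq_add_neg]

theorem hasDerivAt_mul_exp_neg_div (R k : ℝ) {t : ℝ} (ht : t ≠ 0) :
    HasDerivAt (fun u => R * exp (-k / u)) (R * exp (-k / t) * (k / t ^ 2)) t := by
  have h : HasDerivAt (fun u : ℝ => -k / u) (k / t ^ 2) t := by
    simpa [div_eq_mul_inv] using (hasDerivAt_inv ht).const_mul (-k)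
  exact (h.exp.const_mul R).congr_deriv (mul_assoc _ _ _).symm

theorem exists_tendsto_atTop_of_norm_deriv_le_div_sq {F : Type*} [NormedAddCommGroup F]
    [NormedSpace ℝ F] [CompleteSpace F] {f f' : ℝ → F} {T a : ℝ} (hT : 0 < T)
    (hf : ∀ u ∈ Ici T, HasDerivWithinAt f (f' u) (Ici T) u)
    (hf' : ∀ u ∈ Ici T, ‖f' u‖ ≤ a / u ^ 2) : ∃ L, Tendsto f atTop (𝓝 L) := by
  have ha : 0 ≤ a := by
    simpa using (le_div_iff₀ (by positivity)).mp ((norm_nonneg _).trans (hf' T self_mem_Ici))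
  refine cauchySeq_tendsto_of_complete (Metric.cauchySeq_iff'.2 fun ε hε => ?_)
  obtain ⟨N, hNT, hNε⟩ := ((eventually_ge_atTop T).and
    (((tendsto_const_nhds (x := a)).div_atTop tendsto_id).eventually (gt_mem_nhds hε))).exists
  refine ⟨N, fun t ht => ?_⟩
  have hN : 0 < N := hT.trans_le hNT
  have hbarrier := image_norm_le_of_norm_deriv_right_le_deriv_boundary'
    (f := fun u => f u - f N) (a := N) (b := t) (B := fun u => a / N - a / u)
    (B' := fun u => a / u ^ 2)
    (fun u hu => ((hf u (hNT.trans hu.1)).continuousWithinAt.mono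
      (Icc_subset_Ici_self.trans (Ici_subset_Ici.mpr hNT))).sub continuousWithinAt_const)
    (fun u hu => ((hf u (hNT.trans hu.1)).mono (Ici_subset_Ici.mpr (hNT.trans hu.1))).sub_const _)
    (by simp)
    (fun u hu => (continuousAt_const.sub (continuousAt_const.div continuousAt_id
      (hN.trans_le hu.1).ne')).continuousWithinAt)
    (fun u hu => by
      have := ((hasDerivAt_inv (hN.trans_le hu.1).ne').const_mul a).const_sub (a / N)
      simpa [div_eq_mul_inv] using this.hasDerivWithinAt)
    (fun u hu => hf' u (hNT.trans hu.1))
    ⟨ht, le_rfl⟩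
  calc dist (f t) (f N) ≤ a / N - a / t := by rw [dist_eq_norm]; exact hbarrier
    _ ≤ a / N := sub_le_self _ (div_nonneg ha (hN.trans_le ht).le)
    _ < ε := hNε

section LinearODE

variable {V E : ℝ → Matrix n n ℝ} {T c : ℝ}

theorem exists_norm_le_of_hasDerivWithinAt_mul (hT : 0 < T)
    (hV : ∀ t ∈ Ici T, HasDerivWithinAt V (V t * E t) (Ici T) t)
    (hE : ∀ t ∈ Ici T, ‖E t‖ ≤ c / t ^ 2) : ∃ M, ∀ t ∈ Ici T, ‖V t‖ ≤ M := by
  have hc : 0 ≤ c := by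
    simpa using (le_div_iff₀ (by positivity)).mp ((norm_nonneg _).trans (hE T self_mem_Ici))
  set k := Fintype.card n * c + 1
  set R := (‖V T‖ + 1) * exp (k / T)
  refine ⟨R, fun t ht => ?_⟩
  have hbarrier := image_norm_le_of_norm_deriv_right_lt_deriv_boundary'
    (f := V) (a := T) (b := t) (B := fun u => R * exp (-k / u))
    (B' := fun u => R * exp (-k / u) * (k / u ^ 2))
    (fun u hu => (hV u hu.1).continuousWithinAt.mono Icc_subset_Ici_self)
    (fun u hu => (hV u hu.1).mono (Ici_subset_Ici.mpr hu.1))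
    (by simp [R, neg_div, exp_neg])
    (fun u hu =>
      (hasDerivAt_mul_exp_neg_div R k (hT.trans_le hu.1).ne').continuousAt.continuousWithinAt)
    (fun u hu => (hasDerivAt_mul_exp_neg_div R k (hT.trans_le hu.1).ne').hasDerivWithinAt)
    (fun u hu hVu => by
      have hu0 : 0 < u := hT.trans_le hu.1
      calc ‖V u * E u‖ ≤ Fintype.card n * ‖V u‖ * ‖E u‖ := Matrix.norm_mul_le_card_mul _ _
        _ ≤ Fintype.card n * (R * exp (-k / u)) * (c / u ^ 2) := by
          rw [hVu]; gcongr; exact hE u hu.1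
        _ = R * exp (-k / u) * (Fintype.card n * c / u ^ 2) := by ring
        _ < R * exp (-k / u) * (k / u ^ 2) := by gcongr; exact lt_add_one _)
    ⟨ht, le_rfl⟩
  calc ‖V t‖ ≤ R * exp (-k / t) := hbarrier
    _ ≤ R * 1 := by
      gcongr
      exact exp_le_one_iff.mpr (div_nonpos_of_nonpos_of_nonneg (neg_nonpos.mpr (by positivity))
        (hT.trans_le ht).le)
    _ = R := mul_one R

theorem exists_pos_le_det_of_hasDerivWithinAt_mul [DecidableEq n] (hT : 0 < T)
    (hV : ∀ t ∈ Ici T, HasDerivWithinAt V (V t * E t) (Ici T) t)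
    (hE : ∀ t ∈ Ici T, ‖E t‖ ≤ c / t ^ 2) (hVT : 0 < (V T).det) :
    ∃ r > 0, ∀ t ∈ Ici T, r ≤ (V t).det := by
  have hc : 0 ≤ c := by
    simpa using (le_div_iff₀ (by positivity)).mp ((norm_nonneg _).trans (hE T self_mem_Ici))
  set k := Fintype.card n * c + 1
  set r := (V T).det / 2 * exp (-k / T)
  refine ⟨r, by positivity, fun t ht => ?_⟩
  have hdet : ∀ u ∈ Ici T, HasDerivWithinAt (fun u => (V u).det)
      ((V u).det * (E u).trace) (Ici T) u := fun u hu => (hV u hu).matrix_det_of_mul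
  -- the comparison lemma only bounds from above, so compare `-det V` with `u ↦ -r exp (k / u)`
  have hbarrier := image_le_of_deriv_right_lt_deriv_boundary'
    (f := fun u => -(V u).det) (a := T) (b := t) (B := fun u => -(r * exp (-(-k) / u)))
    (B' := fun u => -(r * exp (-(-k) / u) * (-k / u ^ 2)))
    (fun u hu => ((hdet u hu.1).continuousWithinAt.mono Icc_subset_Ici_self).neg)
    (fun u hu => ((hdet u hu.1).mono (Ici_subset_Ici.mpr hu.1)).neg)
    (by simp [r, neg_div, exp_neg]; linarith)
    (fun u hu => (hasDerivAt_mul_exp_neg_div r (-k)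
      (hT.trans_le hu.1).ne').continuousAt.continuousWithinAt.neg)
    (fun u hu => (hasDerivAt_mul_exp_neg_div r (-k) (hT.trans_le hu.1).ne').hasDerivWithinAt.neg)
    (fun u hu hdetu => by
      have hu0 : 0 < u := hT.trans_le hu.1
      have hdetu' : (V u).det = r * exp (k / u) := by simpa using hdetu
      have htr : -(E u).trace ≤ Fintype.card n * c / u ^ 2 := by
        calc -(E u).trace ≤ ‖(E u).trace‖ := neg_le_abs _
          _ ≤ Fintype.card n * ‖E u‖ := Matrix.norm_trace_le_card_mul _
          _ ≤ Fintype.card n * (c / u ^ 2) := by gcongr; exact hE u hu.1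
          _ = Fintype.card n * c / u ^ 2 := by ring
      have hbu : 0 < r * exp (k / u) := by positivity
      calc -((V u).det * (E u).trace) = r * exp (k / u) * -(E u).trace := by rw [hdetu']; ring
        _ ≤ r * exp (k / u) * (Fintype.card n * c / u ^ 2) := by gcongr
        _ < r * exp (k / u) * (k / u ^ 2) := by gcongr; exact lt_add_one _
        _ = _ := by rw [neg_neg]; ring)
    ⟨ht, le_rfl⟩
  calc r = r * 1 := (mul_one r).symm
    _ ≤ r * exp (k / t) := by
      gcongr
      exact one_le_exp (div_nonneg (by positivity) (hT.trans_le ht).le)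
    _ ≤ (V t).det := by simpa using hbarrier

theorem exists_tendsto_of_hasDerivWithinAt_mul (hT : 0 < T)
    (hV : ∀ t ∈ Ici T, HasDerivWithinAt V (V t * E t) (Ici T) t)
    (hE : ∀ t ∈ Ici T, ‖E t‖ ≤ c / t ^ 2) :
    ∃ L, Tendsto V atTop (𝓝 L) := by
  obtain ⟨M, hM⟩ := exists_norm_le_of_hasDerivWithinAt_mul hT hV hE
  refine exists_tendsto_atTop_of_norm_deriv_le_div_sq (a := Fintype.card n * M * c) hT hV
    fun t ht => ?_
  calc ‖V t * E t‖ ≤ Fintype.card n * ‖V t‖ * ‖E t‖ := Matrix.norm_mul_le_card_mul _ _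
    _ ≤ Fintype.card n * M * (c / t ^ 2) := by
      have hM0 : 0 ≤ M := (norm_nonneg _).trans (hM T self_mem_Ici)
      gcongr
      exacts [hM t ht, hE t ht]
    _ = Fintype.card n * M * c / t ^ 2 := by ring

end LinearODE

theorem stmt_19_general (d : ℕ) (T C : ℝ) (hT : 0 < T)
    (K : ℝ → Matrix (Fin d) (Fin d) ℝ)
    (hK : ∀ t ∈ Set.Ici T,
      ‖K t - (1/t) • (1 : Matrix (Fin d) (Fin d) ℝ)‖ ≤ C / t ^ 2)
    (W : ℝ → Matrix (Fin d) (Fin d) ℝ)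
    (hW : ∀ t ∈ Set.Ici T, HasDerivWithinAt W (W t * K t) (Set.Ici T) t)
    (hWT : W T = T • (1 : Matrix (Fin d) (Fin d) ℝ)) :
    ∃ Winf : Matrix (Fin d) (Fin d) ℝ, IsUnit Winf ∧
      Filter.Tendsto (fun t : ℝ => ‖(1/t) • W t - Winf‖) Filter.atTop (nhds 0) := by
  set V := fun t : ℝ => (1 / t) • W t
  set E := fun t : ℝ => K t - (1 / t) • (1 : Matrix (Fin d) (Fin d) ℝ)
  have hV : ∀ t ∈ Ici T, HasDerivWithinAt V (V t * E t) (Ici T) t := fun t ht =>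
    (hW t ht).one_div_smul_of_mul (hT.trans_le ht).ne'
  have hVT : V T = 1 := by simp [V, hWT, smul_smul, hT.ne']
  obtain ⟨Winf, hlim⟩ := exists_tendsto_of_hasDerivWithinAt_mul hT hV hK
  obtain ⟨r, hr, hdet⟩ := exists_pos_le_det_of_hasDerivWithinAt_mul hT hV hK (by simp [hVT])
  have hWinf : r ≤ Winf.det := ge_of_tendsto
    ((continuous_id.matrix_det.tendsto Winf).comp hlim) (eventually_ge_atTop T |>.mono hdet)
  refine ⟨Winf, (Matrix.isUnit_iff_isUnit_det _).mpr (hr.trans_le hWinf).ne'.isUnit,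
    tendsto_iff_norm_sub_tendsto_zero.mp hlim⟩

/-- Linear growth of the matrix weight solving `W' = W K`, `W(T) = T·I`, when
`K(t) = (1/t)·I + O(1/t²)` for `t ≥ T`: there is an invertible matrix `W_∞` with
`(1/t) W(t) → W_∞` as `t → ∞`. -/
theorem stmt_19 (d : ℕ) (hd : 1 ≤ d) (T C : ℝ) (hT : 0 < T) (hC : 0 < C)
    (K : ℝ → Matrix (Fin d) (Fin d) ℝ)
    (hKc : ContinuousOn K (Set.Ici T))
    (hK : ∀ t ∈ Set.Ici T,
      ‖K t - (1/t) • (1 : Matrix (Fin d) (Fin d) ℝ)‖ ≤ C / t ^ 2)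
    (W : ℝ → Matrix (Fin d) (Fin d) ℝ)
    (hW : ∀ t ∈ Set.Ici T, HasDerivWithinAt W (W t * K t) (Set.Ici T) t)
    (hWT : W T = T • (1 : Matrix (Fin d) (Fin d) ℝ)) :
    ∃ Winf : Matrix (Fin d) (Fin d) ℝ, IsUnit Winf ∧
      Filter.Tendsto (fun t : ℝ => ‖(1/t) • W t - Winf‖) Filter.atTop (nhds 0) :=
  stmt_19_general d T C hT K hK W hW hWT
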